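/- (Lemma on convergence of distances, part (ii).) Under the algorithm setup with Assumption 1 and Condition (C1): lim_{n→∞} ‖H_n − T_n(H_n)‖_F = 0 and lim_{n→∞} ‖W_n − S_n(W_n)‖_F = 0. -/

import Mathlib

open Matrix Filter

/-- Frobenius norm of a real matrix. -/
noncomputable def frob {m n : Type*} [Fintype m] [Fintype n] (X : Matrix m n ℝ) : ℝ :=
  Real.sqrt (∑ i, ∑ j, (X i j) ^ 2)

/-- Frobenius inner product of two real matrices. -/
noncomputable def fip {m n : Type*} [Fintype m] [Fintype n] (X Y : Matrix m n ℝ) : ℝ :=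
  ∑ i, ∑ j, X i j * Y i j

/-- Entrywise projection onto the nonnegative orthant. -/
def pplus {m n : Type*} (X : Matrix m n ℝ) : Matrix m n ℝ :=
  Matrix.of fun i j => max (X i j) 0

/-- Entrywise nonnegativity of a matrix. -/
def matNonneg {m n : Type*} (X : Matrix m n ℝ) : Prop := ∀ i j, 0 ≤ X i j

section helpers
variable {m n l : Type*} [Fintype m] [Fintype n] [Fintype l]

lemma fip_self_nonneg (X : Matrix m n ℝ) : 0 ≤ fip X X :=
  Finset.sum_nonneg fun _ _ => Finset.sum_nonneg fun _ _ => mul_self_nonneg _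

lemma frob_eq_sqrt_fip (X : Matrix m n ℝ) : frob X = Real.sqrt (fip X X) := by
  simp [frob, fip, sq]

lemma frob_nonneg (X : Matrix m n ℝ) : 0 ≤ frob X := Real.sqrt_nonneg _

lemma sq_frob (X : Matrix m n ℝ) : frob X ^ 2 = fip X X := by
  rw [frob_eq_sqrt_fip, Real.sq_sqrt (fip_self_nonneg X)]

lemma fip_comm (X Y : Matrix m n ℝ) : fip X Y = fip Y X := by
  simp [fip, mul_comm]

lemma fip_add_left (X Y Z : Matrix m n ℝ) : fip (X + Y) Z = fip X Z + fip Y Z := by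
  simp [fip, add_mul, Finset.sum_add_distrib]

lemma fip_sub_left (X Y Z : Matrix m n ℝ) : fip (X - Y) Z = fip X Z - fip Y Z := by
  simp [fip, sub_mul, Finset.sum_sub_distrib]

lemma fip_smul_left (a : ℝ) (X Y : Matrix m n ℝ) : fip (a • X) Y = a * fip X Y := by
  simp [fip, Matrix.smul_apply, smul_eq_mul, mul_assoc, Finset.mul_sum]

lemma fip_add_right (X Y Z : Matrix m n ℝ) : fip X (Y + Z) = fip X Y + fip X Z := by
  rw [fip_comm, fip_add_left, fip_comm Y X, fip_comm Z X]

lemma fip_sub_right (X Y Z : Matrix m n ℝ) : fip X (Y - Z) = fip X Y - fip X Z := by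
  rw [fip_comm, fip_sub_left, fip_comm Y X, fip_comm Z X]

lemma fip_smul_right (a : ℝ) (X Y : Matrix m n ℝ) : fip X (a • Y) = a * fip X Y := by
  rw [fip_comm, fip_smul_left, fip_comm]

lemma frob_eq_zero_iff (X : Matrix m n ℝ) : frob X = 0 ↔ X = 0 := by
  constructor
  · intro h
    rw [frob_eq_sqrt_fip] at h
    have h2 : fip X X = 0 := by
      exact le_antisymm (Real.sqrt_eq_zero'.mp h) (fip_self_nonneg X)
    have h3 : ∀ i ∈ (Finset.univ : Finset m), ∀ j ∈ (Finset.univ : Finset n),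
        X i j * X i j = 0 := by
      have := (Finset.sum_eq_zero_iff_of_nonneg
        (fun i _ => Finset.sum_nonneg fun j _ => mul_self_nonneg (X i j))).mp h2
      intro i hi j hj
      exact (Finset.sum_eq_zero_iff_of_nonneg
        (fun j _ => mul_self_nonneg (X i j))).mp (this i hi) j hj
    ext i j
    simpa [mul_self_eq_zero] using h3 i (Finset.mem_univ i) j (Finset.mem_univ j)
  · intro h; simp [h, frob]

end helpers

section helpersB
variable {m n l : Type*} [Fintype m] [Fintype n] [Fintype l]

-- Cauchy–Schwarz
lemma fip_le_frob_mul_frob (X Y : Matrix m n ℝ) : fip X Y ≤ frob X * frob Y := by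
  have h1 : fip X Y = ∑ p : m × n, X p.1 p.2 * Y p.1 p.2 := by
    rw [fip, Fintype.sum_prod_type]
  have h2 : frob X = Real.sqrt (∑ p : m × n, (X p.1 p.2) ^ 2) := by
    rw [frob, Fintype.sum_prod_type]
  have h3 : frob Y = Real.sqrt (∑ p : m × n, (Y p.1 p.2) ^ 2) := by
    rw [frob, Fintype.sum_prod_type]
  rw [h1, h2, h3]
  have := Finset.sum_mul_sq_le_sq_mul_sq Finset.univ (fun p : m × n => X p.1 p.2)
    (fun p : m × n => Y p.1 p.2)
  calc ∑ p : m × n, X p.1 p.2 * Y p.1 p.2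
      ≤ |∑ p : m × n, X p.1 p.2 * Y p.1 p.2| := le_abs_self _
    _ = Real.sqrt ((∑ p : m × n, X p.1 p.2 * Y p.1 p.2) ^ 2) := (Real.sqrt_sq_eq_abs _).symm
    _ ≤ Real.sqrt ((∑ p : m × n, (X p.1 p.2) ^ 2) * ∑ p : m × n, (Y p.1 p.2) ^ 2) :=
        Real.sqrt_le_sqrt this
    _ = _ := Real.sqrt_mul (Finset.sum_nonneg fun _ _ => sq_nonneg _) _

-- submultiplicativity
lemma frob_mul_le (A : Matrix l m ℝ) (X : Matrix m n ℝ) :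
    frob (A * X) ≤ frob A * frob X := by
  rw [frob, frob, frob]
  rw [← Real.sqrt_mul (x := ∑ i, ∑ j, A i j ^ 2) (Finset.sum_nonneg fun _ _ => Finset.sum_nonneg fun _ _ => sq_nonneg _)]
  apply Real.sqrt_le_sqrt
  calc ∑ i, ∑ j, ((A * X) i j) ^ 2
      ≤ ∑ i, ∑ j, (∑ k, (A i k) ^ 2) * (∑ k, (X k j) ^ 2) := by
        apply Finset.sum_le_sum; intro i _
        apply Finset.sum_le_sum; intro j _
        simpa [Matrix.mul_apply] using
          Finset.sum_mul_sq_le_sq_mul_sq Finset.univ (fun k => A i k) (fun k => X k j)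
    _ = (∑ i, ∑ k, (A i k) ^ 2) * ∑ j, ∑ k, (X k j) ^ 2 :=
        (Finset.sum_mul_sum Finset.univ Finset.univ
          (fun i => ∑ k, (A i k) ^ 2) (fun j => ∑ k, (X k j) ^ 2)).symm
    _ = (∑ i, ∑ k, (A i k) ^ 2) * ∑ k, ∑ j, (X k j) ^ 2 := by
        congr 1; exact Finset.sum_comm ..

-- adjoint
lemma fip_eq_trace (X Y : Matrix m n ℝ) : fip X Y = Matrix.trace (X * Yᵀ) := by
  simp [fip, Matrix.trace, Matrix.diag, Matrix.mul_apply]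

lemma fip_mul_left (A : Matrix l m ℝ) (X : Matrix m n ℝ) (Y : Matrix l n ℝ) :
    fip (A * X) Y = fip X (Aᵀ * Y) := by
  rw [fip_eq_trace, fip_eq_trace, Matrix.transpose_mul, Matrix.transpose_transpose,
    Matrix.mul_assoc, Matrix.trace_mul_comm, Matrix.mul_assoc]

lemma frob_gram_comm (H : Matrix m n ℝ) : frob (H * Hᵀ) = frob (Hᵀ * H) := by
  rw [frob_eq_sqrt_fip, frob_eq_sqrt_fip]
  congr 1
  rw [fip_eq_trace, fip_eq_trace, Matrix.transpose_mul, Matrix.transpose_transpose,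
    Matrix.transpose_mul, Matrix.transpose_transpose,
    Matrix.mul_assoc, Matrix.trace_mul_comm]
  simp only [Matrix.mul_assoc]
end helpersB

section helpers2
variable {m n l : Type*} [Fintype m] [Fintype n] [Fintype l]

lemma frob_pos {X : Matrix m n ℝ} (h : X ≠ 0) : 0 < frob X :=
  lt_of_le_of_ne (frob_nonneg X) (Ne.symm fun h' => h ((frob_eq_zero_iff X).mp h'))

lemma gram_ne_zero {W : Matrix m n ℝ} (h : W ≠ 0) : Wᵀ * W ≠ 0 := by
  intro h0
  apply h
  ext i j
  have hd : (Wᵀ * W) j j = 0 := by rw [h0]; simp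
  rw [Matrix.mul_apply] at hd
  simp only [Matrix.transpose_apply] at hd
  have : ∀ k ∈ (Finset.univ : Finset m), W k j * W k j = 0 :=
    (Finset.sum_eq_zero_iff_of_nonneg (fun k _ => mul_self_nonneg (W k j))).mp hd
  simpa [mul_self_eq_zero] using this i (Finset.mem_univ i)

lemma frob_transpose (X : Matrix m n ℝ) : frob Xᵀ = frob X := by
  rw [frob, frob]
  simp only [Matrix.transpose_apply]
  congr 1
  exact Finset.sum_comm ..

lemma pplus_nonexp (X Y : Matrix m n ℝ) : frob (pplus X - pplus Y) ≤ frob (X - Y) := by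
  rw [frob, frob]
  apply Real.sqrt_le_sqrt
  apply Finset.sum_le_sum; intro i _
  apply Finset.sum_le_sum; intro j _
  have h := abs_max_sub_max_le_abs (X i j) (Y i j) 0
  have e : (pplus X - pplus Y) i j = max (X i j) 0 - max (Y i j) 0 := by
    simp [pplus, Matrix.sub_apply]
  rw [e, Matrix.sub_apply]
  calc (max (X i j) 0 - max (Y i j) 0) ^ 2 = |max (X i j) 0 - max (Y i j) 0| ^ 2 :=
        (sq_abs _).symm
    _ ≤ |X i j - Y i j| ^ 2 := by
        apply pow_le_pow_left₀ (abs_nonneg _) h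
    _ = (X i j - Y i j) ^ 2 := sq_abs _

lemma fip_sub_smul (X Y : Matrix m n ℝ) (t : ℝ) :
    fip (X - t • Y) (X - t • Y) = fip X X - 2 * t * fip X Y + t ^ 2 * fip Y Y := by
  simp only [fip_sub_left, fip_sub_right, fip_smul_left, fip_smul_right, fip_comm Y X]
  ring

lemma fip_combo (t : ℝ) (P Q : Matrix m n ℝ) :
    fip (t • P + (1 - t) • Q) (t • P + (1 - t) • Q)
      = t * fip P P + (1 - t) * fip Q Q - t * (1 - t) * fip (P - Q) (P - Q) := by
  simp only [fip_add_left, fip_add_right, fip_sub_left, fip_sub_right,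
    fip_smul_left, fip_smul_right, fip_comm Q P]
  ring

lemma step_nonexp (Wm : Matrix l m ℝ) (t : ℝ) (ht0 : 0 ≤ t)
    (ht2 : t * frob (Wmᵀ * Wm) ≤ 2) (Z : Matrix m n ℝ) :
    frob (Z - t • (Wmᵀ * (Wm * Z))) ≤ frob Z := by
  set c := frob (Wmᵀ * Wm) with hc_def
  have hc : 0 ≤ c := frob_nonneg _
  set A := Wmᵀ * (Wm * Z) with hA
  have ht : fip Z A = fip (Wm * Z) (Wm * Z) := (fip_mul_left Wm Z (Wm * Z)).symm
  have htnn : 0 ≤ fip Z A := ht ▸ fip_self_nonneg (Wm * Z)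
  have key : ∀ Y : Matrix m n ℝ, fip (Wm * Y) (Wm * Y) ≤ c * fip Y Y := by
    intro Y
    rw [fip_mul_left Wm Y (Wm * Y), ← Matrix.mul_assoc]
    calc fip Y ((Wmᵀ * Wm) * Y) ≤ frob Y * frob ((Wmᵀ * Wm) * Y) := fip_le_frob_mul_frob ..
      _ ≤ frob Y * (c * frob Y) :=
          mul_le_mul_of_nonneg_left (frob_mul_le _ _) (frob_nonneg _)
      _ = c * fip Y Y := by rw [← sq_frob]; ring
  have hAA : fip A A ≤ c * fip Z A := by
    have h2 : fip A A = fip (Wm * Z) (Wm * A) := by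
      conv_lhs => rw [hA]
      rw [fip_mul_left Wmᵀ (Wm * Z) A, Matrix.transpose_transpose]
    rcases eq_or_lt_of_le (fip_self_nonneg A) with h0 | h0
    · rw [← h0]; exact mul_nonneg hc htnn
    · have c1 : fip A A ≤ frob (Wm * Z) * frob (Wm * A) := h2 ▸ fip_le_frob_mul_frob _ _
      have c2 : fip (Wm * A) (Wm * A) ≤ c * fip A A := key A
      have e1 : (fip A A) ^ 2 ≤ (frob (Wm * Z) * frob (Wm * A)) ^ 2 :=
        pow_le_pow_left₀ (fip_self_nonneg A) c1 2
      rw [mul_pow, sq_frob, sq_frob, ← ht] at e1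
      have e2 : (fip A A) ^ 2 ≤ fip Z A * (c * fip A A) :=
        e1.trans (mul_le_mul_of_nonneg_left c2 htnn)
      have h3 : fip A A * fip A A ≤ (c * fip Z A) * fip A A := by nlinarith [e2]
      exact le_of_mul_le_mul_right h3 h0
  rw [frob_eq_sqrt_fip, frob_eq_sqrt_fip]
  apply Real.sqrt_le_sqrt
  rw [fip_sub_smul]
  nlinarith [mul_le_mul_of_nonneg_left hAA (sq_nonneg t),
    mul_le_mul_of_nonneg_right ht2 (mul_nonneg ht0 htnn)]

lemma step_nonexp_right (Hm : Matrix m n ℝ) (t : ℝ) (ht0 : 0 ≤ t)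
    (ht2 : t * frob (Hmᵀ * Hm) ≤ 2) (Z : Matrix l m ℝ) :
    frob (Z - t • ((Z * Hm) * Hmᵀ)) ≤ frob Z := by
  have hb : t * frob ((Hmᵀ)ᵀ * Hmᵀ) ≤ 2 := by
    rw [Matrix.transpose_transpose, frob_gram_comm]; exact ht2
  have key := step_nonexp Hmᵀ t ht0 hb Zᵀ
  have e : (Z - t • ((Z * Hm) * Hmᵀ))ᵀ = Zᵀ - t • ((Hmᵀ)ᵀ * (Hmᵀ * Zᵀ)) := by
    rw [Matrix.transpose_sub, Matrix.transpose_smul, Matrix.transpose_mul, Matrix.transpose_mul,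
      Matrix.transpose_transpose]
  rw [← frob_transpose (Z - t • ((Z * Hm) * Hmᵀ)), e, ← frob_transpose Z]
  exact key

lemma km_lemma (x : ℕ → Matrix m n ℝ) (F : ℕ → Matrix m n ℝ → Matrix m n ℝ) (a : ℕ → ℝ)
    (ha : ∀ k, a k ∈ Set.Icc (0 : ℝ) 1)
    (hne : ∀ k (X Y : Matrix m n ℝ), frob (F k X - F k Y) ≤ frob (X - Y))
    (hrec : ∀ k, x (k + 1) = a k • x k + (1 - a k) • F k (x k))
    (m₀ : ℕ) (xf : Matrix m n ℝ) (hfix : ∀ k ≥ m₀, F k xf = xf)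
    (hinf : 0 < Filter.atTop.liminf (fun k => a k))
    (hsup : Filter.atTop.limsup (fun k => a k) < 1) :
    Filter.Tendsto (fun k => frob (x k - F k (x k))) Filter.atTop (nhds 0) := by
  set D : ℕ → ℝ := fun k => fip (x k - xf) (x k - xf) with hD_def
  set G : ℕ → ℝ := fun k => fip (x k - F k (x k)) (x k - F k (x k)) with hG_def
  have hD0 : ∀ k, 0 ≤ D k := fun k => fip_self_nonneg _
  have hG0 : ∀ k, 0 ≤ G k := fun k => fip_self_nonneg _
  have step : ∀ k, m₀ ≤ k → a k * (1 - a k) * G k ≤ D k - D (k + 1) := by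
    intro k hk
    have hx : x (k + 1) - xf = a k • (x k - xf) + (1 - a k) • (F k (x k) - xf) := by
      rw [hrec k]; module
    have e : D (k + 1) = a k * D k + (1 - a k) * fip (F k (x k) - xf) (F k (x k) - xf)
        - a k * (1 - a k) * G k := by
      have e2 : (x k - xf) - (F k (x k) - xf) = x k - F k (x k) := by module
      rw [hD_def]
      simp only []
      rw [hx, fip_combo, e2]
    have hE : fip (F k (x k) - xf) (F k (x k) - xf) ≤ D k := by
      have h1 : frob (F k (x k) - xf) ≤ frob (x k - xf) := by
        conv_lhs => rw [← hfix k hk]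
        exact hne k (x k) xf
      have h2 := pow_le_pow_left₀ (frob_nonneg _) h1 2
      rwa [sq_frob, sq_frob] at h2
    have hp0 : 0 ≤ a k := (ha k).1
    have hp1 : 0 ≤ 1 - a k := by linarith [(ha k).2]
    have h5 := mul_le_mul_of_nonneg_left hE hp1
    nlinarith [e, h5]
  have hmono : ∀ k, m₀ ≤ k → D (k + 1) ≤ D k := by
    intro k hk
    have h1 := step k hk
    have hp0 : 0 ≤ a k := (ha k).1
    have hp1 : 0 ≤ 1 - a k := by linarith [(ha k).2]
    have hnn : 0 ≤ a k * (1 - a k) * G k := mul_nonneg (mul_nonneg hp0 hp1) (hG0 k)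
    linarith
  set c : ℕ → ℝ := fun j => D (m₀ + j) - D (m₀ + j + 1) with hc_def
  have hc0 : ∀ j, 0 ≤ c j := by
    intro j
    have := hmono (m₀ + j) (Nat.le_add_right _ _)
    simp only [hc_def]
    linarith
  have hcsum : ∀ nn : ℕ, ∑ j ∈ Finset.range nn, c j = D m₀ - D (m₀ + nn) := by
    intro nn
    have := Finset.sum_range_sub' (fun j => D (m₀ + j)) nn
    simpa [hc_def, add_assoc] using this
  have hsummable : Summable c :=
    summable_of_sum_range_le (c := D m₀) hc0
      (fun nn => by rw [hcsum nn]; linarith [hD0 (m₀ + nn)])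
  have hcz : Filter.Tendsto c Filter.atTop (nhds 0) := hsummable.tendsto_atTop_zero
  have hDdiff : Filter.Tendsto (fun k => D k - D (k + 1)) Filter.atTop (nhds 0) := by
    have hcomp := hcz.comp (tendsto_sub_atTop_nat m₀)
    apply hcomp.congr'
    filter_upwards [Filter.eventually_ge_atTop m₀] with k hk
    simp only [Function.comp_apply, hc_def]
    rw [Nat.add_sub_cancel' hk]
  have hprod : Filter.Tendsto (fun k => a k * (1 - a k) * G k) Filter.atTop (nhds 0) := by
    apply squeeze_zero' ?_ ?_ hDdiff
    · filter_upwards with k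
      exact mul_nonneg (mul_nonneg (ha k).1 (by linarith [(ha k).2])) (hG0 k)
    · filter_upwards [Filter.eventually_ge_atTop m₀] with k hk
      exact step k hk
  -- extract epsilon
  set L := Filter.atTop.liminf (fun k => a k) with hL
  set U := Filter.atTop.limsup (fun k => a k) with hU
  have hbd1 : Filter.IsBoundedUnder (· ≥ ·) Filter.atTop (fun k => a k) :=
    Filter.isBoundedUnder_of ⟨0, fun k => (ha k).1⟩
  have hbd2 : Filter.IsBoundedUnder (· ≤ ·) Filter.atTop (fun k => a k) :=
    Filter.isBoundedUnder_of ⟨1, fun k => (ha k).2⟩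
  have hev1 : ∀ᶠ k in Filter.atTop, L / 2 < a k :=
    Filter.eventually_lt_of_lt_liminf (by linarith) hbd1
  have hev2 : ∀ᶠ k in Filter.atTop, a k < (1 + U) / 2 :=
    Filter.eventually_lt_of_limsup_lt (by linarith) hbd2
  have hU1 : U < 1 := hsup
  set ε := (L / 2) * ((1 - U) / 2) with hε_def
  have hε : 0 < ε := by
    apply mul_pos
    · linarith
    · linarith
  have hev : ∀ᶠ k in Filter.atTop, ε ≤ a k * (1 - a k) := by
    filter_upwards [hev1, hev2] with k h1 h2
    have : (1 - U) / 2 ≤ 1 - a k := by linarith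
    exact mul_le_mul h1.le this (by linarith) (ha k).1
  have hGz : Filter.Tendsto G Filter.atTop (nhds 0) := by
    have htendsto : Filter.Tendsto (fun k => ε⁻¹ * (a k * (1 - a k) * G k))
        Filter.atTop (nhds 0) := by
      have := hprod.const_mul ε⁻¹
      simpa using this
    apply squeeze_zero' (Filter.Eventually.of_forall hG0) ?_ htendsto
    filter_upwards [hev] with k hk
    have h1 : ε * G k ≤ a k * (1 - a k) * G k :=
      mul_le_mul_of_nonneg_right hk (hG0 k)
    calc G k = ε⁻¹ * (ε * G k) := by field_simp
      _ ≤ ε⁻¹ * (a k * (1 - a k) * G k) :=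
          mul_le_mul_of_nonneg_left h1 (inv_nonneg.mpr hε.le)
  have := hGz.sqrt
  rw [Real.sqrt_zero] at this
  exact this.congr fun k => (frob_eq_sqrt_fip _).symm

end helpers2

theorem stmt_13
    (M N R : ℕ) (hM : 0 < M) (hN : 0 < N) (hR : 0 < R)
    (V : Matrix (Fin M) (Fin N) ℝ)
    (W : ℕ → Matrix (Fin M) (Fin R) ℝ) (H : ℕ → Matrix (Fin R) (Fin N) ℝ)
    (α β μ lam : ℕ → ℝ)
    (T : ℕ → Matrix (Fin R) (Fin N) ℝ → Matrix (Fin R) (Fin N) ℝ)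
    (S : ℕ → Matrix (Fin M) (Fin R) ℝ → Matrix (Fin M) (Fin R) ℝ)
    (hW0 : matNonneg (W 0)) (hH0 : matNonneg (H 0))
    (hα : ∀ n, α n ∈ Set.Icc (0:ℝ) 1) (hβ : ∀ n, β n ∈ Set.Icc (0:ℝ) 1)
    (hμ : ∀ n, W n ≠ 0 → 0 < μ n ∧ μ n ≤ 2 / frob ((W n)ᵀ * W n))
    (hT : ∀ n, W n ≠ 0 → ∀ X, T n X = pplus (X - μ n • ((W n)ᵀ * (W n * X - V))))
    (hT0 : ∀ n, W n = 0 → ∀ X, T n X = X)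
    (hHrec : ∀ n, H (n + 1) = α n • H n + (1 - α n) • T n (H n))
    (hlam : ∀ n, H (n + 1) ≠ 0 → 0 < lam n ∧ lam n ≤ 2 / frob ((H (n + 1))ᵀ * H (n + 1)))
    (hS : ∀ n, H (n + 1) ≠ 0 → ∀ X, S n X = pplus (X - lam n • ((X * H (n + 1) - V) * (H (n + 1))ᵀ)))
    (hS0 : ∀ n, H (n + 1) = 0 → ∀ X, S n X = X)
    (hWrec : ∀ n, W (n + 1) = β n • W n + (1 - β n) • S n (W n))
    (hA1 : ∃ m₀ : ℕ,
      (∃ Wf : Matrix (Fin M) (Fin R) ℝ, ∀ n ≥ m₀, S n Wf = Wf) ∧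
      (∃ Hf : Matrix (Fin R) (Fin N) ℝ, ∀ n ≥ m₀, T n Hf = Hf))
    (hC1α : 0 < atTop.liminf (fun n => α n) ∧ atTop.limsup (fun n => α n) < 1)
    (hC1β : 0 < atTop.liminf (fun n => β n) ∧ atTop.limsup (fun n => β n) < 1)
    :
    Tendsto (fun n => frob (H n - T n (H n))) atTop (nhds 0) ∧
    Tendsto (fun n => frob (W n - S n (W n))) atTop (nhds 0) := by
  obtain ⟨m₀, ⟨Wf, hWf⟩, ⟨Hf, hHf⟩⟩ := hA1
  have hTne : ∀ k (X Y : Matrix (Fin R) (Fin N) ℝ),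
      frob (T k X - T k Y) ≤ frob (X - Y) := by
    intro k X Y
    by_cases hw : W k = 0
    · rw [hT0 k hw, hT0 k hw]
    · rw [hT k hw X, hT k hw Y]
      refine (pplus_nonexp _ _).trans ?_
      have halg : (X - μ k • ((W k)ᵀ * (W k * X - V))) - (Y - μ k • ((W k)ᵀ * (W k * Y - V)))
          = (X - Y) - μ k • ((W k)ᵀ * (W k * (X - Y))) := by
        simp only [Matrix.mul_sub, Matrix.sub_mul]
        module
      rw [halg]
      apply step_nonexp
      · exact (hμ k hw).1.le
      · have hcpos : 0 < frob ((W k)ᵀ * W k) := frob_pos (gram_ne_zero hw)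
        exact (le_div_iff₀ hcpos).mp (hμ k hw).2
  have hSne : ∀ k (X Y : Matrix (Fin M) (Fin R) ℝ),
      frob (S k X - S k Y) ≤ frob (X - Y) := by
    intro k X Y
    by_cases hh : H (k + 1) = 0
    · rw [hS0 k hh, hS0 k hh]
    · rw [hS k hh X, hS k hh Y]
      refine (pplus_nonexp _ _).trans ?_
      have halg : (X - lam k • ((X * H (k + 1) - V) * (H (k + 1))ᵀ))
            - (Y - lam k • ((Y * H (k + 1) - V) * (H (k + 1))ᵀ))
          = (X - Y) - lam k • (((X - Y) * H (k + 1)) * (H (k + 1))ᵀ) := by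
        simp only [Matrix.mul_sub, Matrix.sub_mul]
        module
      rw [halg]
      apply step_nonexp_right
      · exact (hlam k hh).1.le
      · have hcpos : 0 < frob ((H (k + 1))ᵀ * H (k + 1)) := frob_pos (gram_ne_zero hh)
        exact (le_div_iff₀ hcpos).mp (hlam k hh).2
  exact ⟨km_lemma H T α hα hTne hHrec m₀ Hf hHf hC1α.1 hC1α.2,
    km_lemma W S β hβ hSne hWrec m₀ Wf hWf hC1β.1 hC1β.2⟩
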